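/- (Isometries fixing the origin are orthogonal.) Let c > 0 and let τ : E → E be a map with τ(0) = 0 which sends the Poincaré ball B_c into B_c, is surjective onto B_c, and preserves the hyperbolic distance: d_c(τ x, τ y) = d_c(x, y) for all x, y ∈ B_c. Then there exists a linear isometry W : E → E such that τ x = W x for all x ∈ B_c. -/

import Mathlib

open scoped RealInnerProductSpace

variable {E : Type*} [NormedAddCommGroup E] [InnerProductSpace ℝ E] [FiniteDimensional ℝ E]

/-- Möbius addition on the Poincaré ball of curvature `-c`. -/
noncomputable def mobiusAdd (c : ℝ) (x y : E) : E :=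
  (1 / (1 + 2 * c * ⟪x, y⟫ + c ^ 2 * ‖x‖ ^ 2 * ‖y‖ ^ 2)) •
    ((1 + 2 * c * ⟪x, y⟫ + c * ‖y‖ ^ 2) • x + (1 - c * ‖x‖ ^ 2) • y)

/-- Inverse hyperbolic tangent. -/
noncomputable def artanh (t : ℝ) : ℝ := (1 / 2) * Real.log ((1 + t) / (1 - t))

/-- Hyperbolic distance on the Poincaré ball of curvature `-c`. -/
noncomputable def hypDist (c : ℝ) (x y : E) : ℝ :=
  (2 / Real.sqrt c) * artanh (Real.sqrt c * ‖mobiusAdd c (-x) y‖)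

/-!
Since `τ 0 = 0`, distance preservation gives `‖τ x‖ = ‖x‖` and
`‖(-τ x) ⊕ τ y‖ = ‖(-x) ⊕ y‖`. From
`‖(-x) ⊕ y‖² (1 - 2c⟪x, y⟫ + c²‖x‖²‖y‖²) = ‖x - y‖²`, the inner product of two points of the
ball is a function of `‖x‖`, `‖y‖` and `‖(-x) ⊕ y‖`, so `τ` preserves inner products on the ball.
A map preserving inner products on a neighbourhood of `0` agrees there with the linear isometry
sending each vector `b i` of an orthonormal basis to `ε⁻¹ τ (ε b i)`.
-/

open Topology

lemma artanh_eq_real_artanh {t : ℝ} (ht : t ∈ Set.Icc (-1) 1) : artanh t = Real.artanh t :=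
  (Real.artanh_eq_half_log ht).symm

lemma artanh_injOn : Set.InjOn artanh (Set.Ioo (-1) 1) := fun a ha b hb h =>
  Real.artanh_injOn ha hb <| by
    rwa [← artanh_eq_real_artanh (Set.Ioo_subset_Icc_self ha),
      ← artanh_eq_real_artanh (Set.Ioo_subset_Icc_self hb)]

lemma sqrt_mul_lt_one {c t : ℝ} (hc : 0 ≤ c) (ht : 0 ≤ t) (h : c * t ^ 2 < 1) : √c * t < 1 := by
  rw [← Real.sqrt_sq ht, ← Real.sqrt_mul hc]
  exact (Real.sqrt_lt' one_pos).2 (by simpa using h)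

section Mobius

variable {V : Type*} [NormedAddCommGroup V] [InnerProductSpace ℝ V]

@[simp]
lemma mobiusAdd_zero_left (c : ℝ) (y : V) : mobiusAdd c 0 y = y := by
  simp [mobiusAdd]

lemma norm_mobiusAdd_numerator_sq (c : ℝ) (x y : V) :
    ‖(1 + 2 * c * ⟪x, y⟫ + c * ‖y‖ ^ 2) • x + (1 - c * ‖x‖ ^ 2) • y‖ ^ 2 =
      (1 + 2 * c * ⟪x, y⟫ + c ^ 2 * ‖x‖ ^ 2 * ‖y‖ ^ 2) * ‖x + y‖ ^ 2 := by
  rw [norm_add_sq_real, norm_smul, norm_smul, mul_pow, mul_pow, Real.norm_eq_abs,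
    Real.norm_eq_abs, sq_abs, sq_abs, real_inner_smul_left, real_inner_smul_right,
    norm_add_sq_real]
  ring

lemma norm_mobiusAdd_sq (c : ℝ) (x y : V) :
    ‖mobiusAdd c x y‖ ^ 2 = ‖x + y‖ ^ 2 / (1 + 2 * c * ⟪x, y⟫ + c ^ 2 * ‖x‖ ^ 2 * ‖y‖ ^ 2) := by
  rw [mobiusAdd, norm_smul, mul_pow, norm_mobiusAdd_numerator_sq, Real.norm_eq_abs, sq_abs]
  rcases eq_or_ne (1 + 2 * c * ⟪x, y⟫ + c ^ 2 * ‖x‖ ^ 2 * ‖y‖ ^ 2) 0 with h | h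
  · simp [h]
  · field_simp

lemma mobiusAdd_denom_sub (c : ℝ) (x y : V) :
    1 + 2 * c * ⟪x, y⟫ + c ^ 2 * ‖x‖ ^ 2 * ‖y‖ ^ 2 - c * ‖x + y‖ ^ 2 =
      (1 - c * ‖x‖ ^ 2) * (1 - c * ‖y‖ ^ 2) := by
  rw [norm_add_sq_real]
  ring

variable {c : ℝ} {x y : V}

lemma lt_mobiusAdd_denom (hx : c * ‖x‖ ^ 2 < 1) (hy : c * ‖y‖ ^ 2 < 1) :
    c * ‖x + y‖ ^ 2 < 1 + 2 * c * ⟪x, y⟫ + c ^ 2 * ‖x‖ ^ 2 * ‖y‖ ^ 2 := by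
  have := mobiusAdd_denom_sub c x y
  nlinarith [mul_pos (sub_pos.2 hx) (sub_pos.2 hy)]

lemma mobiusAdd_denom_pos (hc : 0 ≤ c) (hx : c * ‖x‖ ^ 2 < 1) (hy : c * ‖y‖ ^ 2 < 1) :
    0 < 1 + 2 * c * ⟪x, y⟫ + c ^ 2 * ‖x‖ ^ 2 * ‖y‖ ^ 2 :=
  (mul_nonneg hc (sq_nonneg _)).trans_lt (lt_mobiusAdd_denom hx hy)

lemma mobiusAdd_mem_ball (hc : 0 ≤ c) (hx : c * ‖x‖ ^ 2 < 1) (hy : c * ‖y‖ ^ 2 < 1) :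
    c * ‖mobiusAdd c x y‖ ^ 2 < 1 := by
  rw [norm_mobiusAdd_sq, mul_div_assoc', div_lt_one (mobiusAdd_denom_pos hc hx hy)]
  exact lt_mobiusAdd_denom hx hy

lemma inner_eq_of_norm_mobiusAdd (hc : 0 ≤ c) (hx : c * ‖x‖ ^ 2 < 1) (hy : c * ‖y‖ ^ 2 < 1) :
    ⟪x, y⟫ = (‖x‖ ^ 2 + ‖y‖ ^ 2 - ‖mobiusAdd c (-x) y‖ ^ 2 * (1 + c ^ 2 * ‖x‖ ^ 2 * ‖y‖ ^ 2)) /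
      (2 * (1 - c * ‖mobiusAdd c (-x) y‖ ^ 2)) := by
  have hx' : c * ‖-x‖ ^ 2 < 1 := by rwa [norm_neg]
  have hD := mobiusAdd_denom_pos hc hx' hy
  have hm := mobiusAdd_mem_ball hc hx' hy
  have h := norm_mobiusAdd_sq c (-x) y
  rw [inner_neg_left, norm_neg] at hD h
  rw [neg_add_eq_sub, norm_sub_sq_real, real_inner_comm, eq_div_iff hD.ne'] at h
  rw [eq_div_iff (by linarith)]
  linear_combination h

lemma norm_mobiusAdd_eq_of_hypDist_eq (hc : 0 < c) {x' y' : V} (hx : c * ‖x‖ ^ 2 < 1)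
    (hy : c * ‖y‖ ^ 2 < 1) (hx' : c * ‖x'‖ ^ 2 < 1) (hy' : c * ‖y'‖ ^ 2 < 1)
    (h : hypDist c x y = hypDist c x' y') :
    ‖mobiusAdd c (-x) y‖ = ‖mobiusAdd c (-x') y'‖ := by
  have hmem : ∀ {u v : V}, c * ‖u‖ ^ 2 < 1 → c * ‖v‖ ^ 2 < 1 →
      √c * ‖mobiusAdd c (-u) v‖ ∈ Set.Ioo (-1) 1 := fun {u v} hu hv =>
    ⟨by linarith [show 0 ≤ √c * ‖mobiusAdd c (-u) v‖ by positivity],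
      sqrt_mul_lt_one hc.le (norm_nonneg _) (mobiusAdd_mem_ball hc.le (by rwa [norm_neg]) hv)⟩
  have hsc : 0 < √c := Real.sqrt_pos.2 hc
  unfold hypDist at h
  exact mul_left_cancel₀ hsc.ne'
    (artanh_injOn (hmem hx hy) (hmem hx' hy') (mul_left_cancel₀ (by positivity) h))

end Mobius

theorem exists_linearIsometry_eqOn_of_inner_map_map {V : Type*} [NormedAddCommGroup V]
    [InnerProductSpace ℝ V] {f : E → V} {s : Set E} (hs : s ∈ 𝓝 0)
    (hf : ∀ x ∈ s, ∀ y ∈ s, ⟪f x, f y⟫ = ⟪x, y⟫) : ∃ W : E →ₗᵢ[ℝ] V, Set.EqOn f W s := by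
  obtain ⟨r, hr, hball⟩ := Metric.mem_nhds_iff.1 hs
  let b := stdOrthonormalBasis ℝ E
  have hεb : ∀ i, (r / 2) • b i ∈ s := fun i => hball <| by
    simp [norm_smul, abs_of_pos hr, hr]
  let L : E →ₗ[ℝ] V := b.toBasis.constr ℝ fun i => (r / 2)⁻¹ • f ((r / 2) • b i)
  have hLb : ∀ i, L (b i) = (r / 2)⁻¹ • f ((r / 2) • b i) := by
    intro i
    have := b.toBasis.constr_basis ℝ (fun i => (r / 2)⁻¹ • f ((r / 2) • b i)) i
    rwa [b.coe_toBasis] at this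
  -- Both sides are linear in `y`, so it suffices to compare them on the basis.
  have hpair : ∀ x ∈ s, ∀ y, ⟪f x, L y⟫ = ⟪x, y⟫ := by
    intro x hx
    refine LinearMap.congr_fun (b.toBasis.ext (f₁ := (innerₛₗ ℝ (f x)).comp L)
      (f₂ := innerₛₗ ℝ x) fun i => ?_)
    simp only [OrthonormalBasis.coe_toBasis, LinearMap.coe_comp, Function.comp_apply,
      innerₛₗ_apply_apply, hLb, inv_div, real_inner_smul_right, hf x hx _ (hεb i)]
    field_simp
  have horth : Orthonormal ℝ (L ∘ b.toBasis) := by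
    rw [orthonormal_iff_ite]
    intro i j
    simp only [Function.comp_apply, OrthonormalBasis.coe_toBasis]
    rw [hLb i, real_inner_smul_left, hpair _ (hεb i), real_inner_smul_left,
      inv_mul_cancel_left₀ (by positivity), orthonormal_iff_ite.1 b.orthonormal]
  let W := L.isometryOfOrthonormal (by simp [b.orthonormal]) horth
  refine ⟨W, fun x hx => ?_⟩
  have hfx : ‖f x‖ = ‖x‖ := by
    rw [norm_eq_sqrt_real_inner, norm_eq_sqrt_real_inner x, hf x hx x hx]
  have hsq : ‖f x - W x‖ ^ 2 = 0 := by
    rw [norm_sub_sq_real, hfx, W.norm_map]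
    change ‖x‖ ^ 2 - 2 * ⟪f x, L x⟫ + ‖x‖ ^ 2 = 0
    rw [hpair x hx, real_inner_self_eq_norm_sq]
    ring
  exact sub_eq_zero.1 (norm_eq_zero.1 (pow_eq_zero_iff two_ne_zero |>.1 hsq))

theorem isometry_fixing_origin_is_orthogonal_general (c : ℝ) (hc : 0 < c) (τ : E → E)
    (hτ0 : τ 0 = 0)
    (hmaps : ∀ x : E, c * ‖x‖ ^ 2 < 1 → c * ‖τ x‖ ^ 2 < 1)
    (hiso : ∀ x y : E, c * ‖x‖ ^ 2 < 1 → c * ‖y‖ ^ 2 < 1 →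
      hypDist c (τ x) (τ y) = hypDist c x y) :
    ∃ W : E →ₗᵢ[ℝ] E, ∀ x : E, c * ‖x‖ ^ 2 < 1 → τ x = W x := by
  have hmob : ∀ x y : E, c * ‖x‖ ^ 2 < 1 → c * ‖y‖ ^ 2 < 1 →
      ‖mobiusAdd c (-τ x) (τ y)‖ = ‖mobiusAdd c (-x) y‖ := fun x y hx hy =>
    norm_mobiusAdd_eq_of_hypDist_eq hc (hmaps x hx) (hmaps y hy) hx hy (hiso x y hx hy)
  have hnorm : ∀ x : E, c * ‖x‖ ^ 2 < 1 → ‖τ x‖ = ‖x‖ := fun x hx => by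
    simpa [hτ0] using hmob 0 x (by simp) hx
  have hinner : ∀ x ∈ {x : E | c * ‖x‖ ^ 2 < 1}, ∀ y ∈ {x : E | c * ‖x‖ ^ 2 < 1},
      ⟪τ x, τ y⟫ = ⟪x, y⟫ := fun x hx y hy => by
    rw [inner_eq_of_norm_mobiusAdd hc.le (hmaps x hx) (hmaps y hy),
      inner_eq_of_norm_mobiusAdd hc.le hx hy, hnorm x hx, hnorm y hy, hmob x y hx hy]
  have hball : {x : E | c * ‖x‖ ^ 2 < 1} ∈ 𝓝 0 :=
    (isOpen_lt (by fun_prop) continuous_const).mem_nhds (by simp)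
  obtain ⟨W, hW⟩ := exists_linearIsometry_eqOn_of_inner_map_map hball hinner
  exact ⟨W, fun x hx => hW hx⟩

theorem isometry_fixing_origin_is_orthogonal (c : ℝ) (hc : 0 < c) (τ : E → E)
    (hτ0 : τ 0 = 0)
    (hmaps : ∀ x : E, c * ‖x‖ ^ 2 < 1 → c * ‖τ x‖ ^ 2 < 1)
    (hsurj : ∀ y : E, c * ‖y‖ ^ 2 < 1 → ∃ x : E, c * ‖x‖ ^ 2 < 1 ∧ τ x = y)
    (hiso : ∀ x y : E, c * ‖x‖ ^ 2 < 1 → c * ‖y‖ ^ 2 < 1 →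
      hypDist c (τ x) (τ y) = hypDist c x y) :
    ∃ W : E →ₗᵢ[ℝ] E, ∀ x : E, c * ‖x‖ ^ 2 < 1 → τ x = W x :=
  isometry_fixing_origin_is_orthogonal_general c hc τ hτ0 hmaps hiso
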